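/- Consider the runoff combination Copeland+cup on the candidate set {a,b,c} with weighted votes, a tie-breaking order T whose T-greatest element is c, and any fixed cup agenda. Let P be a weighted profile (the non-manipulators) and w_1,…,w_k positive manipulator weights. Then there exists a choice of manipulator votes which, added to P with weights w_1,…,w_k, makes c the Copeland+cup winner if and only if c is the Copeland+cup winner when every manipulator casts the vote c≻b≻a, or c is the Copeland+cup winner when every manipulator casts the vote c≻a≻b. -/

import Mathlib

/-
Weighted voting on the three-candidate set {a, b, c}. A weighted profile is a
finite list of pairs (vote, weight), where a vote is a duplicate-free list of
all three candidates (earlier = more preferred) and the weight is a positive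
natural number. `T` always denotes the tie-breaking (strict linear) order.
-/

inductive Cand : Type
  | a | b | c
  deriving DecidableEq

instance : Fintype Cand :=
  ⟨{Cand.a, Cand.b, Cand.c}, fun x => by cases x <;> simp⟩

/-- A weighted profile: a list of (vote, weight) pairs. -/
abbrev WProfile := List (List Cand × ℕ)

/-- The total weight `n` of a weighted profile. -/
def totalW (P : WProfile) : ℕ := (P.map Prod.snd).sum

/-- `N P x y`: the total weight of votes in `P` ranking `x` above `y`. -/
def Nw (P : WProfile) (x y : Cand) : ℕ :=
  ((P.filter fun p => p.1.idxOf x < p.1.idxOf y).map Prod.snd).sum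

/-- The `k`-approval score of `e`: the total weight of votes ranking `e`
among the top `k` positions. -/
def kApproval (P : WProfile) (k : ℕ) (e : Cand) : ℕ :=
  ((P.filter fun p => p.1.idxOf e < k).map Prod.snd).sum

/-- The Bucklin score of `e`: the least `k` such that the `k`-approval score
of `e` is strictly greater than half the total weight. -/
noncomputable def bucklinScore (P : WProfile) (e : Cand) : ℕ :=
  sInf {k | totalW P < 2 * kApproval P k e}

/-- `v` is a vote: a strict linear order of all three candidates. -/
def ValidVote (v : List Cand) : Prop := v.Nodup ∧ v.toFinset = Finset.univ

/-- A valid weighted profile: every vote is a linear order and every weight is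
positive. -/
def ValidWProfile (P : WProfile) : Prop := ∀ p ∈ P, ValidVote p.1 ∧ 0 < p.2

/-- The `T`-greatest candidate among the maximisers of `f`. -/
def argmaxT (T : LinearOrder Cand) (f : Cand → ℕ) : Cand :=
  @Finset.max' Cand T (Finset.univ.filter fun e => ∀ z, f z ≤ f e) (by
    obtain ⟨w, hw, hm⟩ := Finset.exists_max_image Finset.univ f ⟨Cand.a, Finset.mem_univ _⟩
    exact ⟨w, Finset.mem_filter.2 ⟨Finset.mem_univ _, fun z => hm z (Finset.mem_univ _)⟩⟩)

/-- The `T`-greatest candidate among the minimisers of `f`. -/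
def argminT (T : LinearOrder Cand) (f : Cand → ℕ) : Cand :=
  @Finset.max' Cand T (Finset.univ.filter fun e => ∀ z, f e ≤ f z) (by
    obtain ⟨w, hw, hm⟩ := Finset.exists_min_image Finset.univ f ⟨Cand.a, Finset.mem_univ _⟩
    exact ⟨w, Finset.mem_filter.2 ⟨Finset.mem_univ _, fun z => hm z (Finset.mem_univ _)⟩⟩)

/-- The plurality score of `e`: the total weight of votes ranking `e` first. -/
def pluralityScore (P : WProfile) (e : Cand) : ℕ :=
  ((P.filter fun p => p.1.head? = some e).map Prod.snd).sum

/-- The plurality winner. -/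
def pluralityWinner (T : LinearOrder Cand) (P : WProfile) : Cand :=
  argmaxT T (pluralityScore P)

/-- The Copeland score of `x`: the number of candidates `z ≠ x` with
`N(x,z) > N(z,x)`. -/
def copelandScore (P : WProfile) (x : Cand) : ℕ :=
  (Finset.univ.filter fun z => z ≠ x ∧ Nw P z x < Nw P x z).card

/-- The Copeland winner. -/
def copelandWinner (T : LinearOrder Cand) (P : WProfile) : Cand :=
  argmaxT T (copelandScore P)

/-- The maximin score of `x`: the minimum of `N(x,z)` over `z ≠ x`. -/
def maximinScore (P : WProfile) (x : Cand) : ℕ :=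
  (((Finset.univ : Finset Cand).erase x).image fun z => Nw P x z).min' (by
    apply Finset.Nonempty.image
    cases x <;> decide)

/-- The maximin winner. -/
def maximinWinner (T : LinearOrder Cand) (P : WProfile) : Cand :=
  argmaxT T (maximinScore P)

/-- The Bucklin winner: the `T`-greatest candidate of minimal Bucklin score. -/
noncomputable def bucklinWinner (T : LinearOrder Cand) (P : WProfile) : Cand :=
  argminT T (bucklinScore P)

/-- Winner of the pairwise contest between `x` and `z` (the `T`-greater
candidate winning on a tie). -/
def pairWin (T : LinearOrder Cand) (P : WProfile) (x z : Cand) : Cand :=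
  if Nw P z x < Nw P x z then x
  else if Nw P x z < Nw P z x then z
  else if T.lt x z then z else x

/-- The candidate other than the two (distinct) given ones. -/
def third (x y : Cand) : Cand :=
  if Cand.a ≠ x ∧ Cand.a ≠ y then Cand.a
  else if Cand.b ≠ x ∧ Cand.b ≠ y then Cand.b
  else Cand.c

/-- The cup winner for the agenda in which `p` and `q` meet first and the
winner then meets the remaining candidate. -/
def cupWinner (T : LinearOrder Cand) (p q : Cand) (P : WProfile) : Cand :=
  pairWin T P (pairWin T P p q) (third p q)

/-- Run-off combination `X + Y`: the common winner if `X` and `Y` agree;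
otherwise the pairwise-majority winner between the two winners, with the
`T`-greater candidate winning a tied run-off. -/
def runoffWinner (T : LinearOrder Cand) (X Y : WProfile → Cand) (P : WProfile) : Cand :=
  let x := X P
  let y := Y P
  if x = y then x
  else if Nw P y x < Nw P x y then x
  else if Nw P x y < Nw P y x then y
  else if T.lt x y then y else x

/-!
The Copeland+cup winner depends only on the signs of the three pairwise majority margins and on
the tie-breaking order, which (with `c` on top) is fixed by how it orders `a` and `b`; so the
claim reduces to finitely many cases. Manipulators who rank `c` first push the margins of `a` and
`b` over `c` as low as they can go, and a victory of `c` survives lowering them. The margin of `a`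
over `b` lies between the values produced by `c ≻ b ≻ a` and by `c ≻ a ≻ b`; it can equal neither
only when it is a tie, and when the first round of the cup pairs two distinct candidates a
victory of `c` at an `a`–`b` tie survives breaking the tie in one of the two directions.
-/

namespace CopelandCup

def tieRank (ab : Bool) : Cand → ℕ
  | .a => if ab then 0 else 1
  | .b => if ab then 1 else 0
  | .c => 2

abbrev tieOrder (ab : Bool) : LinearOrder Cand :=
  LinearOrder.lift' (tieRank ab) (by cases ab <;> decide)

theorem exists_eq_tieOrder (T : LinearOrder Cand) (hT : ∀ x, T.le x .c) :
    ∃ ab, T = tieOrder ab := by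
  let _ := T
  have hac : Cand.a < .c := (hT _).lt_of_ne (by decide)
  have hbc : Cand.b < .c := (hT _).lt_of_ne (by decide)
  refine ⟨decide (Cand.a < .b), LinearOrder.ext_lt fun x y => ?_⟩
  change x < y ↔ tieRank _ x < tieRank _ y
  rcases lt_or_gt_of_ne (show Cand.a ≠ .b by decide) with hab | hab <;>
    cases x <;> cases y <;> simp [tieRank, hab, hac, hbc, hab.not_gt, hac.not_gt, hbc.not_gt]

def ofSigns (sab sac sbc : SignType) : Cand → Cand → SignType
  | .a, .b => sab
  | .b, .a => -sab
  | .a, .c => sac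
  | .c, .a => -sac
  | .b, .c => sbc
  | .c, .b => -sbc
  | _, _ => 0

namespace Majority

variable (T : LinearOrder Cand) (m : Cand → Cand → SignType)

def duel (x z : Cand) : Cand :=
  if m x z = 1 then x else if m x z = -1 then z else if T.lt x z then z else x

def copeland : Cand :=
  argmaxT T fun x => (Finset.univ.filter fun z => z ≠ x ∧ m x z = 1).card

def cup (p q : Cand) : Cand :=
  duel T m (duel T m p q) (third p q)

def runoff (p q : Cand) : Cand :=
  if copeland T m = cup T m p q then copeland T m else duel T m (copeland T m) (cup T m p q)

variable {ab : Bool} {sab sac sbc : SignType} {p q : Cand}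

theorem runoff_ofSigns_eq_c_of_le {sac' sbc' : SignType} (hac : sac' ≤ sac) (hbc : sbc' ≤ sbc)
    (h : runoff (tieOrder ab) (ofSigns sab sac sbc) p q = .c) :
    runoff (tieOrder ab) (ofSigns sab sac' sbc') p q = .c := by
  revert ab sab sac sbc sac' sbc' p q
  decide

theorem runoff_ofSigns_eq_c_of_tie (hpq : p ≠ q)
    (h : runoff (tieOrder ab) (ofSigns 0 sac sbc) p q = .c) :
    runoff (tieOrder ab) (ofSigns (-1) sac sbc) p q = .c ∨
      runoff (tieOrder ab) (ofSigns 1 sac sbc) p q = .c := by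
  revert ab sac sbc p q
  decide

theorem runoff_ofSigns_eq_c_of_between {lo hi : SignType} (hpq : p ≠ q)
    (hlo : lo ≤ sab) (hhi : sab ≤ hi) (h : runoff (tieOrder ab) (ofSigns sab sac sbc) p q = .c) :
    runoff (tieOrder ab) (ofSigns lo sac sbc) p q = .c ∨
      runoff (tieOrder ab) (ofSigns hi sac sbc) p q = .c := by
  rcases eq_or_ne lo sab with rfl | hlo'
  · exact .inl h
  rcases eq_or_ne sab hi with rfl | hhi'
  · exact .inr h
  obtain ⟨rfl, rfl, rfl⟩ : lo = -1 ∧ sab = 0 ∧ hi = 1 := by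
    clear h
    revert lo sab hi
    decide
  exact runoff_ofSigns_eq_c_of_tie hpq h

end Majority

def margin (P : WProfile) (x y : Cand) : ℤ := Nw P x y - Nw P y x

noncomputable def majority (P : WProfile) (x y : Cand) : SignType := SignType.sign (margin P x y)

theorem majority_eq_ofSigns (P : WProfile) :
    majority P = ofSigns (majority P .a .b) (majority P .a .c) (majority P .b .c) := by
  have hswap : ∀ x y, majority P y x = -majority P x y := fun x y => by
    rw [majority, majority, ← Left.sign_neg, margin, margin, neg_sub]
  have hself : ∀ x, majority P x x = 0 := fun x => by simp [majority, margin]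
  funext x y
  cases x <;> cases y <;> simp only [ofSigns, hself] <;> exact hswap _ _

section Bridge

variable (T : LinearOrder Cand) (P : WProfile)

theorem pairWin_eq_duel (x z : Cand) : pairWin T P x z = Majority.duel T (majority P) x z := by
  simp only [pairWin, Majority.duel, majority, margin, sign_eq_one_iff, sign_eq_neg_one_iff,
    sub_pos, sub_neg, Nat.cast_lt]

theorem copelandWinner_eq_copeland : copelandWinner T P = Majority.copeland T (majority P) := by
  unfold copelandWinner Majority.copeland
  congr 1
  funext x
  simp only [copelandScore, majority, margin, sign_eq_one_iff, sub_pos, Nat.cast_lt]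

theorem runoffWinner_eq_runoff (p q : Cand) :
    runoffWinner T (copelandWinner T) (cupWinner T p q) P =
      Majority.runoff T (ofSigns (majority P .a .b) (majority P .a .c) (majority P .b .c)) p q := by
  have hcup : cupWinner T p q P = Majority.cup T (majority P) p q := by
    simp only [cupWinner, Majority.cup, pairWin_eq_duel]
  change (if _ then _ else pairWin T P _ _) = _
  rw [← majority_eq_ofSigns, Majority.runoff, copelandWinner_eq_copeland, hcup, pairWin_eq_duel]

end Bridge

theorem Nw_append (P L : WProfile) (x y : Cand) : Nw (P ++ L) x y = Nw P x y + Nw L x y := by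
  simp [Nw, List.filter_append]

theorem margin_append (P L : WProfile) (x y : Cand) :
    margin (P ++ L) x y = margin P x y + margin L x y := by
  simp only [margin, Nw_append]
  push_cast
  ring

theorem Nw_le_totalW (L : WProfile) (x y : Cand) : Nw L x y ≤ totalW L :=
  ((L.filter_sublist).map Prod.snd).sum_le_sum fun _ _ => Nat.zero_le _

theorem abs_margin_le_totalW (L : WProfile) (x y : Cand) : |margin L x y| ≤ totalW L :=
  abs_sub_le_of_nonneg_of_le (Nat.cast_nonneg _) (Nat.cast_le.2 (Nw_le_totalW L x y))
    (Nat.cast_nonneg _) (Nat.cast_le.2 (Nw_le_totalW L y x))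

theorem totalW_ofFn {k : ℕ} (v : Fin k → List Cand) (w : Fin k → ℕ) :
    totalW (List.ofFn fun i => (v i, w i)) = ∑ i, w i := by
  simp [totalW, List.map_ofFn, List.sum_ofFn]

theorem Nw_ofFn_const {k : ℕ} (v : List Cand) (w : Fin k → ℕ) (x y : Cand) :
    Nw (List.ofFn fun i => (v, w i)) x y = if v.idxOf x < v.idxOf y then ∑ i, w i else 0 := by
  unfold Nw
  split_ifs with h
  · rw [List.filter_eq_self.2 (by simp [List.mem_ofFn, h]), List.map_ofFn, List.sum_ofFn]
    rfl
  · rw [List.filter_eq_nil_iff.2 (by simp [List.mem_ofFn, not_lt.1 h])]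
    rfl

theorem margin_ofFn_const {k : ℕ} (v : List Cand) (w : Fin k → ℕ) (x y : Cand) :
    margin (List.ofFn fun i => (v, w i)) x y =
      ((if v.idxOf x < v.idxOf y then ∑ i, w i else 0 : ℕ) : ℤ) -
        ((if v.idxOf y < v.idxOf x then ∑ i, w i else 0 : ℕ) : ℤ) := by
  simp only [margin, Nw_ofFn_const]

end CopelandCup

open CopelandCup

theorem copeland_cup_manipulation_general
    (T : LinearOrder Cand) (hT : ∀ x : Cand, T.le x Cand.c)
    (p q : Cand) (hpq : p ≠ q)
    (P : WProfile)
    (k : ℕ) (w : Fin k → ℕ) :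
    (∃ v : Fin k → List Cand, (∀ i, ValidVote (v i)) ∧
        runoffWinner T (copelandWinner T) (cupWinner T p q)
          (P ++ List.ofFn fun i => (v i, w i)) = Cand.c) ↔
    (runoffWinner T (copelandWinner T) (cupWinner T p q)
        (P ++ List.ofFn fun i => ([Cand.c, Cand.b, Cand.a], w i)) = Cand.c ∨
      runoffWinner T (copelandWinner T) (cupWinner T p q)
        (P ++ List.ofFn fun i => ([Cand.c, Cand.a, Cand.b], w i)) = Cand.c) := by
  constructor
  · rintro ⟨v, -, hwin⟩
    obtain ⟨ab, rfl⟩ := exists_eq_tieOrder T hT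
    have hL x y :=
      abs_le.1 (totalW_ofFn v w ▸ abs_margin_le_totalW (List.ofFn fun i => (v i, w i)) x y)
    simp +decide only [runoffWinner_eq_runoff, majority, margin_append, margin_ofFn_const, ite_true,
      ite_false, Nat.cast_zero, sub_zero, zero_sub] at hwin ⊢
    exact Majority.runoff_ofSigns_eq_c_of_between hpq
      (SignType.sign.monotone (by linarith [hL .a .b]))
      (SignType.sign.monotone (by linarith [hL .a .b]))
      (Majority.runoff_ofSigns_eq_c_of_le (SignType.sign.monotone (by linarith [hL .a .c]))
        (SignType.sign.monotone (by linarith [hL .b .c])) hwin)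
  · rintro (h | h) <;> exact ⟨_, fun _ => ⟨by decide, by decide⟩, h⟩

/-- Manipulation of `Copeland + cup` on 3 candidates with weighted votes,
tie-breaking order `T` with `T`-greatest element `c`, and an arbitrary cup
agenda (`p` meets `q` first): some choice of manipulator votes of positive
weights `w₁, …, w_k` makes `c` the `Copeland + cup` winner iff the uniform
vote `c ≻ b ≻ a` makes `c` the winner or the uniform vote `c ≻ a ≻ b` does. -/
theorem copeland_cup_manipulation
    (T : LinearOrder Cand) (hT : ∀ x : Cand, T.le x Cand.c)
    (p q : Cand) (hpq : p ≠ q)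
    (P : WProfile) (hP : ValidWProfile P)
    (k : ℕ) (w : Fin k → ℕ) (hw : ∀ i, 0 < w i) :
    (∃ v : Fin k → List Cand, (∀ i, ValidVote (v i)) ∧
        runoffWinner T (copelandWinner T) (cupWinner T p q)
          (P ++ List.ofFn fun i => (v i, w i)) = Cand.c) ↔
    (runoffWinner T (copelandWinner T) (cupWinner T p q)
        (P ++ List.ofFn fun i => ([Cand.c, Cand.b, Cand.a], w i)) = Cand.c ∨
      runoffWinner T (copelandWinner T) (cupWinner T p q)
        (P ++ List.ofFn fun i => ([Cand.c, Cand.a, Cand.b], w i)) = Cand.c) :=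
  copeland_cup_manipulation_general T hT p q hpq P k w
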